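/- arXiv:2406.07455 — 3 statements merged into one kernel-verified Lean document; each statement's English description precedes it below -/
import Mathlib

section
/- Fix an integer H ≥ 1 and define α_t = (H+1)/(H+t) for integers t ≥ 1, α_t^0 = ∏_{j=1}^t (1 − α_j), and α_t^i = α_i · ∏_{j=i+1}^t (1 − α_j) for integers 1 ≤ i ≤ t (empty products equal 1). Then for every integer t ≥ 1: 1/√t ≤ ∑_{i=1}^t α_t^i/√i ≤ 2/√t. -/
open Finset

/-- Step size `α_t = (H+1)/(H+t)`. -/
noncomputable def lr (H t : ℕ) : ℝ := (H + 1) / (H + t)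

/-- Learning-rate weights `α_t^0 = ∏_{j=1}^t (1 - α_j)` and
`α_t^i = α_i ∏_{j=i+1}^t (1 - α_j)` for `i ≥ 1`. -/
noncomputable def lrW (H t i : ℕ) : ℝ :=
  if i = 0 then ∏ j ∈ Finset.Icc 1 t, (1 - lr H j)
  else lr H i * ∏ j ∈ Finset.Icc (i + 1) t, (1 - lr H j)

/-!
Write `S_t = ∑_{i=1}^t α_t^i / √i`. Since `α_{t+1}^i = (1 - α_{t+1}) α_t^i` for `i ≤ t` and
`α_{t+1}^{t+1} = α_{t+1}`, the sums satisfy `S_{t+1} = α_{t+1}/√(t+1) + (1 - α_{t+1}) S_t`,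
a convex combination. Both bounds then follow by induction on `t`: the lower one because
`1/√t` is decreasing, the upper one because `2 t √(t+1) ≤ (2t+1) √t`, i.e. `√(t(t+1)) ≤ t + 1/2`.
-/

lemma lr_succ (H t : ℕ) : lr H (t + 1) = (H + 1) / (H + t + 1) := by
  simp only [lr, Nat.cast_add, Nat.cast_one, add_assoc]

lemma one_sub_lr_succ (H t : ℕ) : 1 - lr H (t + 1) = t / (H + t + 1) := by
  rw [lr_succ]
  field_simp
  ring

lemma lrW_self {H i : ℕ} (hi : i ≠ 0) : lrW H i i = lr H i := by
  simp [lrW, hi]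

lemma lrW_succ_of_le {H t i : ℕ} (hi : i ≤ t) :
    lrW H (t + 1) i = (1 - lr H (t + 1)) * lrW H t i := by
  unfold lrW
  split_ifs
  · rw [prod_Icc_succ_top (by omega : 1 ≤ t + 1), mul_comm]
  · rw [prod_Icc_succ_top (by omega : i + 1 ≤ t + 1)]
    ring

noncomputable def lrWInvSqrtSum (H t : ℕ) : ℝ :=
  ∑ i ∈ Icc 1 t, lrW H t i / Real.sqrt i

lemma lrWInvSqrtSum_succ (H t : ℕ) :
    lrWInvSqrtSum H (t + 1)
      = ((H + 1) / Real.sqrt (t + 1) + t * lrWInvSqrtSum H t) / (H + t + 1) := by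
  have hweights : ∀ i ∈ Icc 1 t,
      lrW H (t + 1) i / Real.sqrt i = (1 - lr H (t + 1)) * (lrW H t i / Real.sqrt i) := by
    intro i hi
    rw [lrW_succ_of_le (mem_Icc.mp hi).2, mul_div_assoc]
  rw [lrWInvSqrtSum, sum_Icc_succ_top (by omega), sum_congr rfl hweights, ← mul_sum,
    lrW_self (Nat.succ_ne_zero t), one_sub_lr_succ, lr_succ, ← lrWInvSqrtSum]
  push_cast
  field_simp
  ring

lemma two_mul_mul_sqrt_succ_le (t : ℝ) (ht : 0 ≤ t) :
    2 * t * Real.sqrt (t + 1) ≤ (2 * t + 1) * Real.sqrt t := by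
  have hs := Real.sq_sqrt ht
  have hs' := Real.sq_sqrt (by linarith : 0 ≤ t + 1)
  have hamgm : 2 * (Real.sqrt t * Real.sqrt (t + 1)) ≤ 2 * t + 1 := by
    nlinarith [sq_nonneg (Real.sqrt t - Real.sqrt (t + 1))]
  calc 2 * t * Real.sqrt (t + 1)
      = Real.sqrt t * (2 * (Real.sqrt t * Real.sqrt (t + 1))) := by
        linear_combination (-2 * Real.sqrt (t + 1)) * hs
    _ ≤ Real.sqrt t * (2 * t + 1) := by gcongr
    _ = (2 * t + 1) * Real.sqrt t := mul_comm _ _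

lemma lrWInvSqrtSum_bounds (H : ℕ) {t : ℕ} (ht : 1 ≤ t) :
    1 / Real.sqrt t ≤ lrWInvSqrtSum H t ∧ lrWInvSqrtSum H t ≤ 2 / Real.sqrt t := by
  induction t, ht using Nat.le_induction with
  | base =>
    have hlr : lr H 1 = 1 := by
      rw [lr, Nat.cast_one]
      exact div_self (by positivity)
    simp [lrWInvSqrtSum, lrW_self, hlr]
  | succ t ht ih =>
    obtain ⟨hlower, hupper⟩ := ih
    have hst : 0 < Real.sqrt t := Real.sqrt_pos.mpr (by exact_mod_cast ht)
    have hst' : 0 < Real.sqrt (t + 1) := Real.sqrt_pos.mpr (by positivity)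
    have hmono : Real.sqrt t ≤ Real.sqrt (t + 1) := Real.sqrt_le_sqrt (by linarith)
    have hsqrt := two_mul_mul_sqrt_succ_le t (Nat.cast_nonneg t)
    have hD : (0 : ℝ) < H + t + 1 := by positivity
    rw [lrWInvSqrtSum_succ, Nat.cast_succ, le_div_iff₀ hD, div_le_iff₀ hD]
    constructor
    · have : 1 / Real.sqrt (t + 1) ≤ lrWInvSqrtSum H t :=
        (one_div_le_one_div_of_le hst hmono).trans hlower
      calc 1 / Real.sqrt (t + 1) * (H + t + 1)
          = (H + 1) / Real.sqrt (t + 1) + t * (1 / Real.sqrt (t + 1)) := by ring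
        _ ≤ (H + 1) / Real.sqrt (t + 1) + t * lrWInvSqrtSum H t := by gcongr
    · have hkey : t * (2 / Real.sqrt t) ≤ (H + 2 * t + 1) / Real.sqrt (t + 1) := by
        rw [mul_div_assoc', div_le_div_iff₀ hst hst']
        nlinarith [mul_nonneg (Nat.cast_nonneg H : (0 : ℝ) ≤ H) hst.le]
      calc (H + 1) / Real.sqrt (t + 1) + t * lrWInvSqrtSum H t
          ≤ (H + 1) / Real.sqrt (t + 1) + t * (2 / Real.sqrt t) := by gcongr
        _ ≤ (H + 1) / Real.sqrt (t + 1) + (H + 2 * t + 1) / Real.sqrt (t + 1) := by gcongr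
        _ = 2 / Real.sqrt (t + 1) * (H + t + 1) := by ring

theorem stmt_4_general (H : ℕ) (t : ℕ) (ht : 1 ≤ t) :
    1 / Real.sqrt t ≤ ∑ i ∈ Finset.Icc 1 t, lrW H t i / Real.sqrt i
      ∧ ∑ i ∈ Finset.Icc 1 t, lrW H t i / Real.sqrt i ≤ 2 / Real.sqrt t :=
  lrWInvSqrtSum_bounds H ht

/-- Property (2) of the learning-rate weights: for every `t ≥ 1`,
`1/√t ≤ ∑_{i=1}^t α_t^i / √i ≤ 2/√t`. -/
theorem stmt_4 (H : ℕ) (hH : 1 ≤ H) (t : ℕ) (ht : 1 ≤ t) :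
    1 / Real.sqrt t ≤ ∑ i ∈ Finset.Icc 1 t, lrW H t i / Real.sqrt i
      ∧ ∑ i ∈ Finset.Icc 1 t, lrW H t i / Real.sqrt i ≤ 2 / Real.sqrt t :=
  stmt_4_general H t ht
end

section
/- Fix an integer H ≥ 1 and define α_t = (H+1)/(H+t) for integers t ≥ 1, α_t^0 = ∏_{j=1}^t (1 − α_j), and α_t^i = α_i · ∏_{j=i+1}^t (1 − α_j) for integers 1 ≤ i ≤ t (empty products equal 1). Then for every integer i ≥ 1, the series ∑_{t=i}^∞ α_t^i converges and ∑_{t=i}^∞ α_t^i = 1 + 1/H. -/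
open Finset

/-!
Write `C_t = ∏_{j=i+1}^t (1 - α_j)`, so that `α_t^i = α_i C_t`, and since
`1 - α_{t+1} = t / (H + t + 1)` the tail `R_t = α_i (H + t) C_t / H` satisfies
`R_t - R_{t+1} = α_i C_t`. The series therefore telescopes to `R_i = (H + 1) / H`, provided
`R_t → 0`; this holds because `t (H + t) C_t` is nonincreasing once `H ≥ 1`.
-/

open Filter Topology

theorem hasSum_sub_succ_of_antitone {R : ℕ → ℝ} {l : ℝ} (hR : Antitone R)
    (hl : Tendsto R atTop (𝓝 l)) : HasSum (fun n ↦ R n - R (n + 1)) (R 0 - l) := by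
  rw [hasSum_iff_tendsto_nat_of_nonneg fun n ↦ sub_nonneg.2 (hR n.le_succ)]
  simp_rw [sum_range_sub']
  exact tendsto_const_nhds.sub hl

lemma one_sub_lr (H : ℕ) {j : ℕ} (hj : 1 ≤ j) : 1 - lr H j = ((j : ℝ) - 1) / (H + j) := by
  have : (H : ℝ) + j ≠ 0 := by positivity
  unfold lr
  field_simp
  ring

lemma lr_nonneg (H t : ℕ) : 0 ≤ lr H t := by
  unfold lr
  positivity

noncomputable def lrProd (H i t : ℕ) : ℝ := ∏ j ∈ Icc (i + 1) t, (1 - lr H j)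

lemma lrW_eq_lr_mul_lrProd (H t : ℕ) {i : ℕ} (hi : i ≠ 0) : lrW H t i = lr H i * lrProd H i t :=
  if_neg hi

lemma lrProd_nonneg (H i t : ℕ) : 0 ≤ lrProd H i t := by
  refine prod_nonneg fun j hj ↦ ?_
  have hj1 : 1 ≤ j := by linarith [(mem_Icc.1 hj).1]
  rw [one_sub_lr H hj1]
  have : (1 : ℝ) ≤ j := by exact_mod_cast hj1
  exact div_nonneg (by linarith) (by positivity)

lemma lrProd_self (H i : ℕ) : lrProd H i i = 1 := by
  simp [lrProd]

lemma lrProd_succ (H : ℕ) {i t : ℕ} (hit : i ≤ t) :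
    lrProd H i (t + 1) = lrProd H i t * (t / (H + t + 1)) := by
  rw [lrProd, prod_Icc_succ_top (by omega), one_sub_lr H (by omega), ← lrProd]
  push_cast
  ring_nf

lemma mul_mul_lrProd_le {H : ℕ} (hH : 1 ≤ H) {i t : ℕ} (hit : i ≤ t) :
    (t : ℝ) * ((H + t) * lrProd H i t) ≤ i * (H + i) := by
  induction t, hit using Nat.le_induction with
  | base => simp [lrProd_self]
  | succ t hit ih =>
    have hH' : (1 : ℝ) ≤ H := by exact_mod_cast hH
    have hC := lrProd_nonneg H i t
    have hstep : ((t + 1 : ℕ) : ℝ) * ((H + (t + 1 : ℕ)) * lrProd H i (t + 1))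
        = (t + 1) * t * lrProd H i t := by
      rw [lrProd_succ H hit]
      push_cast
      field_simp
      ring
    rw [hstep]
    calc ((t : ℝ) + 1) * t * lrProd H i t ≤ (H + t) * t * lrProd H i t :=
          mul_le_mul_of_nonneg_right (mul_le_mul_of_nonneg_right (by linarith) (by positivity)) hC
      _ ≤ i * (H + i) := by linarith

lemma tendsto_mul_lrProd {H : ℕ} (hH : 1 ≤ H) (i : ℕ) :
    Tendsto (fun t : ℕ ↦ (H + t) * lrProd H i t) atTop (𝓝 0) := by
  refine squeeze_zero' (Eventually.of_forall fun t ↦ mul_nonneg (by positivity)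
    (lrProd_nonneg H i t)) ?_ (tendsto_const_div_atTop_nhds_zero_nat ((i : ℝ) * (H + i)))
  filter_upwards [eventually_ge_atTop i, eventually_gt_atTop 0] with t hit ht
  rw [le_div_iff₀' (by exact_mod_cast ht)]
  exact mul_mul_lrProd_le hH hit

noncomputable def lrTail (H i t : ℕ) : ℝ := lr H i / H * ((H + t) * lrProd H i t)

lemma lrTail_self {H : ℕ} (hH : H ≠ 0) (i : ℕ) : lrTail H i i = 1 + 1 / H := by
  have : (H : ℝ) + i ≠ 0 := by positivity
  simp only [lrTail, lr, lrProd_self]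
  field_simp

lemma lrTail_sub_lrTail_succ {H : ℕ} (hH : H ≠ 0) {i t : ℕ} (hit : i ≤ t) :
    lrTail H i t - lrTail H i (t + 1) = lr H i * lrProd H i t := by
  have : (H : ℝ) + t + 1 ≠ 0 := by positivity
  simp only [lrTail, lrProd_succ H hit]
  push_cast
  field_simp
  ring

lemma lrTail_succ_le {H : ℕ} (hH : H ≠ 0) {i t : ℕ} (hit : i ≤ t) :
    lrTail H i (t + 1) ≤ lrTail H i t := by
  have := lrTail_sub_lrTail_succ hH hit
  have := mul_nonneg (lr_nonneg H i) (lrProd_nonneg H i t)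
  linarith

lemma tendsto_lrTail {H : ℕ} (hH : 1 ≤ H) (i : ℕ) :
    Tendsto (lrTail H i) atTop (𝓝 0) := by
  have h := (tendsto_mul_lrProd hH i).const_mul (lr H i / H)
  rw [mul_zero] at h
  exact h

/-- Property (4) of the learning-rate weights: for every `i ≥ 1`, the series
`∑_{t=i}^∞ α_t^i` converges with sum `1 + 1/H`. -/
theorem stmt_6 (H : ℕ) (hH : 1 ≤ H) (i : ℕ) (hi : 1 ≤ i) :
    HasSum (fun t : ℕ => if i ≤ t then lrW H t i else 0) (1 + 1 / (H : ℝ)) := by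
  have hH0 : H ≠ 0 := by omega
  have hhead : ∑ t ∈ range i, (if i ≤ t then lrW H t i else 0) = 0 :=
    sum_eq_zero fun t ht ↦ if_neg (by simp at ht; omega)
  have hterm (n : ℕ) : (if i ≤ n + i then lrW H (n + i) i else 0)
      = lrTail H i (n + i) - lrTail H i (n + 1 + i) := by
    rw [if_pos (by omega), lrW_eq_lr_mul_lrProd H _ (by omega), add_right_comm,
      lrTail_sub_lrTail_succ hH0 (by omega)]
  have hanti : Antitone fun n ↦ lrTail H i (n + i) := antitone_nat_of_succ_le fun n ↦ by
    rw [add_right_comm]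
    exact lrTail_succ_le hH0 (Nat.le_add_left i n)
  have htail := hasSum_sub_succ_of_antitone hanti
    ((tendsto_lrTail hH i).comp (tendsto_add_atTop_nat i))
  rw [← hasSum_nat_add_iff' i, hhead, sub_zero, ← lrTail_self hH0 i]
  simp only [hterm]
  simpa only [zero_add, sub_zero] using htail
end

section
/- Let (σ_n)_{n≥1} be independent, identically distributed real-valued random variables taking values in [0, 1] almost surely, with common mean p. Let C ≥ 1 be a real number, δ ∈ (0, C], and c ≥ 1 a real number. Then P( ∃ n ≥ 1 : |(1/n)·∑_{i=1}^n σ_i − p| > √(c·log(C·n/δ)/n) ) ≤ 4·(δ/C)². -/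
open MeasureTheory ProbabilityTheory Real
open scoped NNReal

/-!
Each `σ i - p` takes values in an interval of length one, so by Hoeffding's lemma it is
sub-Gaussian with variance proxy `1/4`. Hoeffding's inequality bounds the probability that the
`n`-th empirical mean deviates by more than `r` by `2 exp (-2 n r²)`; at the confidence radius
`r = √(c log (C n / δ) / n)` with `c ≥ 1` this is at most `2 (δ / C)² / n²`. A union bound over
`n` and `∑ 1 / n² = π² / 6 ≤ 2` finish the proof.
-/

section Hoeffding

variable {Ω : Type*} [MeasurableSpace Ω] {μ : Measure Ω}

lemma measureReal_abs_sum_range_ge_le_of_iIndepFun {X : ℕ → Ω → ℝ} (h_indep : iIndepFun X μ)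
    {c : ℝ≥0} {n : ℕ} (h_subG : ∀ i < n, HasSubgaussianMGF (X i) c μ) {ε : ℝ} (hε : 0 ≤ ε) :
    μ.real {ω | ε ≤ |∑ i ∈ Finset.range n, X i ω|}
      ≤ 2 * exp (-ε ^ 2 / (2 * n * c)) := by
  have : IsProbabilityMeasure μ := h_indep.isProbabilityMeasure
  have h_indep_neg : iIndepFun (fun i ω ↦ -X i ω) μ :=
    h_indep.comp (fun _ ↦ Neg.neg) fun _ ↦ measurable_neg
  have h_upper := HasSubgaussianMGF.measure_sum_range_ge_le_of_iIndepFun h_indep h_subG hε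
  have h_lower := HasSubgaussianMGF.measure_sum_range_ge_le_of_iIndepFun h_indep_neg
    (fun i hi ↦ (h_subG i hi).neg) hε
  simp only [Finset.sum_neg_distrib] at h_lower
  have h_split : {ω | ε ≤ |∑ i ∈ Finset.range n, X i ω|}
      = {ω | ε ≤ ∑ i ∈ Finset.range n, X i ω} ∪ {ω | ε ≤ -∑ i ∈ Finset.range n, X i ω} := by
    ext ω
    exact le_abs (α := ℝ)
  calc μ.real {ω | ε ≤ |∑ i ∈ Finset.range n, X i ω|}
      ≤ μ.real {ω | ε ≤ ∑ i ∈ Finset.range n, X i ω}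
        + μ.real {ω | ε ≤ -∑ i ∈ Finset.range n, X i ω} := h_split ▸ measureReal_union_le _ _
    _ ≤ 2 * exp (-ε ^ 2 / (2 * n * c)) := by linarith

lemma hasSubgaussianMGF_sub_of_mem_Icc_zero_one [IsProbabilityMeasure μ] {X : Ω → ℝ}
    (hX : AEMeasurable X μ) (hb : ∀ᵐ ω ∂μ, X ω ∈ Set.Icc (0 : ℝ) 1) {p : ℝ}
    (hp : ∫ ω, X ω ∂μ = p) :
    HasSubgaussianMGF (fun ω ↦ X ω - p) (1 / 4) μ := by
  have h := hasSubgaussianMGF_of_mem_Icc hX hb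
  rw [hp] at h
  convert h
  rw [sub_zero, nnnorm_one]
  norm_num

lemma measure_lt_abs_mean_sub_le_of_iIndepFun [IsProbabilityMeasure μ] {X : ℕ → Ω → ℝ}
    (h_meas : ∀ i, Measurable (X i)) (h_indep : iIndepFun X μ)
    (h_bdd : ∀ i, ∀ᵐ ω ∂μ, X i ω ∈ Set.Icc (0 : ℝ) 1) {p : ℝ}
    (h_mean : ∀ i, ∫ ω, X i ω ∂μ = p) {n : ℕ} (hn : 0 < n) {r : ℝ} (hr : 0 ≤ r) :
    μ {ω | r < |(1 / n : ℝ) * ∑ i ∈ Finset.range n, X i ω - p|}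
      ≤ ENNReal.ofReal (2 * exp (-2 * n * r ^ 2)) := by
  have hn' : (0 : ℝ) < n := Nat.cast_pos.2 hn
  have h_indep_centered : iIndepFun (fun i ω ↦ X i ω - p) μ :=
    h_indep.comp (fun _ x ↦ x - p) fun _ ↦ measurable_id.sub_const p
  have h_subG i (_ : i < n) : HasSubgaussianMGF (fun ω ↦ X i ω - p) (1 / 4) μ :=
    hasSubgaussianMGF_sub_of_mem_Icc_zero_one (h_meas i).aemeasurable (h_bdd i) (h_mean i)
  have h_hoeffding := measureReal_abs_sum_range_ge_le_of_iIndepFun h_indep_centered h_subG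
    (mul_nonneg hn'.le hr)
  have h_sub : {ω | r < |(1 / n : ℝ) * ∑ i ∈ Finset.range n, X i ω - p|}
      ⊆ {ω | n * r ≤ |∑ i ∈ Finset.range n, (X i ω - p)|} := by
    intro ω hω
    have h_eq : ∑ i ∈ Finset.range n, (X i ω - p)
        = n * ((1 / n : ℝ) * ∑ i ∈ Finset.range n, X i ω - p) := by
      rw [Finset.sum_sub_distrib, Finset.sum_const, Finset.card_range, nsmul_eq_mul]
      field_simp
    rw [Set.mem_ofPred_eq, h_eq, abs_mul, abs_of_pos hn']
    exact mul_le_mul_of_nonneg_left hω.le hn'.le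
  calc μ {ω | r < |(1 / n : ℝ) * ∑ i ∈ Finset.range n, X i ω - p|}
      ≤ μ {ω | n * r ≤ |∑ i ∈ Finset.range n, (X i ω - p)|} := measure_mono h_sub
    _ = ENNReal.ofReal (μ.real {ω | n * r ≤ |∑ i ∈ Finset.range n, (X i ω - p)|}) :=
        (ofReal_measureReal).symm
    _ ≤ ENNReal.ofReal (2 * exp (-2 * n * r ^ 2)) := by
        refine ENNReal.ofReal_le_ofReal (h_hoeffding.trans_eq ?_)
        congr 2
        push_cast
        field_simp
        ring

end Hoeffding

/-- The bonus `b_h(s, a, a')` of B-RUCB after `n` comparisons. -/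
noncomputable def confidenceRadius (c C δ : ℝ) (n : ℕ) : ℝ := √(c * log (C * n / δ) / n)

lemma exp_neg_two_mul_confidenceRadius_sq_le {c C δ : ℝ} (hc : 1 ≤ c) (hδ0 : 0 < δ)
    (hδC : δ ≤ C) {n : ℕ} (hn : 0 < n) :
    exp (-2 * n * confidenceRadius c C δ n ^ 2) ≤ (δ / C) ^ 2 / n ^ 2 := by
  have hn' : (1 : ℝ) ≤ n := Nat.one_le_cast.2 hn
  have hC : 0 < C := hδ0.trans_le hδC
  have h_ratio : 1 ≤ C * n / δ := by
    rw [le_div_iff₀ hδ0, one_mul]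
    nlinarith
  have h_log := log_nonneg h_ratio
  have h_sq : n * confidenceRadius c C δ n ^ 2 = c * log (C * n / δ) := by
    rw [confidenceRadius, sq_sqrt (by positivity)]
    field_simp
  calc exp (-2 * n * confidenceRadius c C δ n ^ 2)
      ≤ exp (-2 * log (C * n / δ)) := by
        rw [mul_assoc, h_sq, exp_le_exp]
        nlinarith
    _ = (δ / C) ^ 2 / n ^ 2 := by
        rw [mul_comm, exp_mul, exp_log (by positivity)]
        rw [show (-2 : ℝ) = ((-2 : ℤ) : ℝ) by norm_num, rpow_intCast]
        field_simp

lemma tsum_ofReal_div_sq_le {a : ℝ} (ha : 0 ≤ a) :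
    ∑' n : ℕ, ENNReal.ofReal (a / n ^ 2) ≤ ENNReal.ofReal (2 * a) := by
  have h_sum : HasSum (fun n : ℕ ↦ a / n ^ 2) (a * (π ^ 2 / 6)) := by
    simpa only [mul_one_div] using hasSum_zeta_two.mul_left a
  rw [← ENNReal.ofReal_tsum_of_nonneg (fun _ ↦ by positivity) h_sum.summable, h_sum.tsum_eq]
  have h_zeta_two : π ^ 2 / 6 ≤ 2 := by nlinarith [pi_lt_d2, pi_pos]
  exact ENNReal.ofReal_le_ofReal (by nlinarith)

theorem stmt_13_general {Ω : Type*} [MeasurableSpace Ω] (μ : Measure Ω) [IsProbabilityMeasure μ]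
    (σ : ℕ → Ω → ℝ) (hmeas : ∀ i, Measurable (σ i))
    (hindep : iIndepFun σ μ)
    (hbdd : ∀ i, ∀ᵐ ω ∂μ, σ i ω ∈ Set.Icc (0 : ℝ) 1)
    (p : ℝ) (hmean : ∀ i, ∫ ω, σ i ω ∂μ = p)
    (C δ c : ℝ) (hδ0 : 0 < δ) (hδC : δ ≤ C) (hc : 1 ≤ c) :
    μ {ω | ∃ n : ℕ, 1 ≤ n ∧
        Real.sqrt (c * Real.log (C * n / δ) / n) <
          |(1 / n : ℝ) * ∑ i ∈ Finset.range n, σ i ω - p|} ≤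
      ENNReal.ofReal (4 * (δ / C) ^ 2) := by
  have h_event (n : ℕ) : μ {ω | 1 ≤ n ∧ confidenceRadius c C δ n <
      |(1 / n : ℝ) * ∑ i ∈ Finset.range n, σ i ω - p|}
        ≤ ENNReal.ofReal (2 * (δ / C) ^ 2 / n ^ 2) := by
    rcases Nat.eq_zero_or_pos n with rfl | hn
    · simp
    calc _ ≤ μ {ω | confidenceRadius c C δ n <
          |(1 / n : ℝ) * ∑ i ∈ Finset.range n, σ i ω - p|} := measure_mono fun _ h ↦ h.2
      _ ≤ ENNReal.ofReal (2 * exp (-2 * n * confidenceRadius c C δ n ^ 2)) :=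
          measure_lt_abs_mean_sub_le_of_iIndepFun hmeas hindep hbdd hmean hn (sqrt_nonneg _)
      _ ≤ ENNReal.ofReal (2 * (δ / C) ^ 2 / n ^ 2) := by
          rw [mul_div_assoc]
          gcongr
          exact exp_neg_two_mul_confidenceRadius_sq_le hc hδ0 hδC hn
  calc _ = μ (⋃ n : ℕ, {ω | 1 ≤ n ∧ confidenceRadius c C δ n <
        |(1 / n : ℝ) * ∑ i ∈ Finset.range n, σ i ω - p|}) := by
        rw [Set.ofPred_exists]; rfl
    _ ≤ ∑' n : ℕ, ENNReal.ofReal (2 * (δ / C) ^ 2 / n ^ 2) :=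
        (measure_iUnion_le _).trans (ENNReal.tsum_le_tsum h_event)
    _ ≤ ENNReal.ofReal (4 * (δ / C) ^ 2) := by
        rw [show 4 * (δ / C) ^ 2 = 2 * (2 * (δ / C) ^ 2) by ring]
        exact tsum_ofReal_div_sq_le (by positivity)

/-- Anytime confidence bound underlying the concentration lemma (Lemma 4):
for i.i.d. `[0,1]`-valued random variables `σ_i` with mean `p`, constants
`C ≥ 1`, `δ ∈ (0, C]`, `c ≥ 1`, the probability that the empirical mean of
the first `n` variables ever deviates from `p` by more than
`√(c log(C n/δ)/n)` for some `n ≥ 1` is at most `4 (δ/C)²`. -/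
theorem stmt_13 {Ω : Type*} [MeasurableSpace Ω] (μ : Measure Ω) [IsProbabilityMeasure μ]
    (σ : ℕ → Ω → ℝ) (hmeas : ∀ i, Measurable (σ i))
    (hindep : iIndepFun σ μ)
    (hid : ∀ i j, IdentDistrib (σ i) (σ j) μ μ)
    (hbdd : ∀ i, ∀ᵐ ω ∂μ, σ i ω ∈ Set.Icc (0 : ℝ) 1)
    (p : ℝ) (hmean : ∀ i, ∫ ω, σ i ω ∂μ = p)
    (C δ c : ℝ) (hC : 1 ≤ C) (hδ0 : 0 < δ) (hδC : δ ≤ C) (hc : 1 ≤ c) :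
    μ {ω | ∃ n : ℕ, 1 ≤ n ∧
        Real.sqrt (c * Real.log (C * n / δ) / n) <
          |(1 / n : ℝ) * ∑ i ∈ Finset.range n, σ i ω - p|} ≤
      ENNReal.ofReal (4 * (δ / C) ^ 2) :=
  stmt_13_general μ σ hmeas hindep hbdd p hmean C δ c hδ0 hδC hc
end
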